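/- Let n ≥ 2, s₁, s₂ > 0 and 0 < τ ≤ min{s₁, s₂}. There exists a constant C = C(n, τ) > 0 such that for all integers k ≥ 3, all reals r > 1 and every x ∈ ℝⁿ, one has (Σ_{i=1}^k ⟨x−P^i⟩^{-s₁}) · (Σ_{j=1}^k ⟨x−P^j⟩^{-s₂}) − Σ_{i=1}^k ⟨x−P^i⟩^{-s₁−s₂} ≤ C k (k/r)^{τ} Σ_{i=1}^k ⟨x−P^i⟩^{-s₁−s₂+τ}. -/

import Mathlib

open Real Finset

/-- `⟨x⟩ := (1 + |x|²)^{1/2}`. -/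
noncomputable def jap {n : ℕ} (x : EuclideanSpace ℝ (Fin n)) : ℝ :=
  Real.sqrt (1 + ‖x‖ ^ 2)

/-- The points `P^j := (r cos(2π(j−1)/k), r sin(2π(j−1)/k), 0, …, 0) ∈ ℝⁿ`. -/
noncomputable def pts (n k : ℕ) (r : ℝ) (j : ℕ) : EuclideanSpace ℝ (Fin n) :=
  WithLp.toLp 2 fun (i : Fin n) => if (i : ℕ) = 0 then r * Real.cos (2 * Real.pi * ((j : ℝ) - 1) / k)
  else if (i : ℕ) = 1 then r * Real.sin (2 * Real.pi * ((j : ℝ) - 1) / k)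
  else 0

lemma jap_pos' {n : ℕ} (x : EuclideanSpace ℝ (Fin n)) : 0 < jap x :=
  Real.sqrt_pos.mpr (by positivity)

lemma norm_le_jap' {n : ℕ} (x : EuclideanSpace ℝ (Fin n)) : ‖x‖ ≤ jap x := by
  have : ‖x‖ = Real.sqrt (‖x‖ ^ 2) := by rw [Real.sqrt_sq (norm_nonneg x)]
  rw [this, jap]
  exact Real.sqrt_le_sqrt (by nlinarith)

lemma sin_lb' (k m : ℕ) (hm : 1 ≤ m) (hmk : m < k) :
    2 / (k:ℝ) ≤ Real.sin (Real.pi * m / k) := by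
  have hk : (0:ℝ) < k := by exact_mod_cast (by omega : 0 < k)
  have hm' : (1:ℝ) ≤ m := by exact_mod_cast hm
  have hmk' : (m:ℝ) ≤ (k:ℝ) - 1 := by
    have : (m:ℝ) + 1 ≤ k := by exact_mod_cast hmk
    linarith
  have hpi := Real.pi_pos
  have hm0 : (0:ℝ) < m := by linarith
  set θ := Real.pi * m / k with hθ
  rcases le_or_gt θ (Real.pi / 2) with h | h
  · have h0 : 0 ≤ θ := by rw [hθ]; positivity
    have := Real.mul_le_sin h0 h
    have hθlb : Real.pi / k ≤ θ := by rw [hθ]; gcongr; nlinarith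
    calc 2 / (k:ℝ) = 2 / Real.pi * (Real.pi / k) := by field_simp
    _ ≤ 2 / Real.pi * θ := by apply mul_le_mul_of_nonneg_left hθlb (by positivity)
    _ ≤ Real.sin θ := this
  · have hsub : Real.sin θ = Real.sin (Real.pi - θ) := (Real.sin_pi_sub θ).symm
    have h0 : 0 ≤ Real.pi - θ := by
      have : θ ≤ Real.pi := by rw [hθ, div_le_iff₀ hk]; nlinarith
      linarith
    have h2 : Real.pi - θ ≤ Real.pi / 2 := by linarith
    have := Real.mul_le_sin h0 h2
    have hθlb : Real.pi / k ≤ Real.pi - θ := by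
      rw [hθ, div_le_iff₀ hk, sub_mul, div_mul_cancel₀ _ (ne_of_gt hk)]
      nlinarith
    rw [hsub]
    calc 2 / (k:ℝ) = 2 / Real.pi * (Real.pi / k) := by field_simp
    _ ≤ 2 / Real.pi * (Real.pi - θ) := by apply mul_le_mul_of_nonneg_left hθlb (by positivity)
    _ ≤ Real.sin (Real.pi - θ) := this

lemma pts_norm_sq (n k : ℕ) (hn : 2 ≤ n) (r : ℝ) (i j : ℕ) :
    ‖pts n k r i - pts n k r j‖ ^ 2 =
      4 * r ^ 2 * Real.sin (Real.pi * ((i:ℝ) - (j:ℝ)) / k) ^ 2 := by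
  set a := 2 * Real.pi * ((i : ℝ) - 1) / k with ha
  set b := 2 * Real.pi * ((j : ℝ) - 1) / k with hb
  have e0 : (⟨0, by omega⟩ : Fin n) ≠ ⟨1, by omega⟩ := by simp [Fin.ext_iff]
  have hnorm : ‖pts n k r i - pts n k r j‖ ^ 2 =
      ∑ l : Fin n, ‖(pts n k r i - pts n k r j) l‖ ^ 2 := by
    rw [EuclideanSpace.norm_eq, Real.sq_sqrt]
    positivity
  rw [hnorm]
  have hsum : ∑ l : Fin n, ‖(pts n k r i - pts n k r j) l‖ ^ 2 =
      ∑ l ∈ ({⟨0, by omega⟩, ⟨1, by omega⟩} : Finset (Fin n)),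
        ‖(pts n k r i - pts n k r j) l‖ ^ 2 := by
    symm
    apply Finset.sum_subset (Finset.subset_univ _)
    intro l _ hl
    simp only [Finset.mem_insert, Finset.mem_singleton] at hl
    push_neg at hl
    have h0 : (l : ℕ) ≠ 0 := fun h => hl.1 (by ext; simp [h])
    have h1 : (l : ℕ) ≠ 1 := fun h => hl.2 (by ext; simp [h])
    simp [pts, PiLp.sub_apply, h0, h1]
  rw [hsum, Finset.sum_pair e0]
  simp only [pts, PiLp.sub_apply]
  norm_num
  have hcos : Real.cos a * Real.cos b + Real.sin a * Real.sin b = Real.cos (a - b) :=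
    (Real.cos_sub a b).symm
  have hab : a - b = 2 * (Real.pi * ((i:ℝ) - (j:ℝ)) / k) := by rw [ha, hb]; ring
  have hsq : Real.sin (Real.pi * ((i:ℝ) - (j:ℝ)) / k) ^ 2 = 1/2 - Real.cos (a - b) / 2 := by
    rw [hab]
    simpa using Real.sin_sq_eq_half_sub (Real.pi * ((i:ℝ) - (j:ℝ)) / k)
  have h1 : Real.sin a ^ 2 + Real.cos a ^ 2 = 1 := Real.sin_sq_add_cos_sq a
  have h2 : Real.sin b ^ 2 + Real.cos b ^ 2 = 1 := Real.sin_sq_add_cos_sq b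
  rw [← ha, ← hb]
  nlinarith

lemma pts_dist (n k : ℕ) (hn : 2 ≤ n) (r : ℝ) (hr : 0 < r) (i j : ℕ)
    (hi : i ∈ Finset.Icc 1 k) (hj : j ∈ Finset.Icc 1 k) (hij : j < i) :
    4 * r / k ≤ ‖pts n k r i - pts n k r j‖ := by
  simp only [Finset.mem_Icc] at hi hj
  have hk : (0:ℝ) < k := by exact_mod_cast (by omega : 0 < k)
  set m := i - j with hm
  have hm1 : 1 ≤ m := by omega
  have hmk : m < k := by omega
  have hcast : (i:ℝ) - (j:ℝ) = (m:ℝ) := by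
    rw [hm]; push_cast [Nat.cast_sub hij.le]; ring
  have hsin := sin_lb' k m hm1 hmk
  have hsq := pts_norm_sq n k hn r i j
  rw [hcast] at hsq
  have hnn : (0:ℝ) ≤ ‖pts n k r i - pts n k r j‖ := norm_nonneg _
  have hs0 : 0 ≤ Real.sin (Real.pi * m / k) := le_trans (by positivity) hsin
  have heq : ‖pts n k r i - pts n k r j‖ = 2 * r * Real.sin (Real.pi * m / k) := by
    rw [← Real.sqrt_sq hnn, hsq, show 4 * r ^ 2 * Real.sin (Real.pi * m / k) ^ 2
      = (2 * r * Real.sin (Real.pi * m / k)) ^ 2 by ring, Real.sqrt_sq (by positivity)]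
  rw [heq]
  have h2 : 2 * r * (2 / (k:ℝ)) ≤ 2 * r * Real.sin (Real.pi * m / k) := by
    apply mul_le_mul_of_nonneg_left hsin (by positivity)
  calc 4 * r / (k:ℝ) = 2 * r * (2 / k) := by field_simp; ring
  _ ≤ _ := h2

lemma key0 (s₁ s₂ τ : ℝ) (hτ0 : 0 < τ) (hτ2 : τ ≤ s₂) (d₁ d₂ B : ℝ)
    (hd₁ : 0 < d₁) (hd₂ : 0 < d₂) (hle : d₁ ≤ d₂) (hB : 0 < B) (hBd : B ≤ d₂) :
    d₁ ^ (-s₁) * d₂ ^ (-s₂) ≤ B ^ (-τ) * d₁ ^ (-s₁ - s₂ + τ) := by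
  have h1 : d₂ ^ (-s₂) = d₂ ^ (-τ) * d₂ ^ (τ - s₂) := by
    rw [← Real.rpow_add hd₂]; ring_nf
  have h2 : d₂ ^ (-τ) ≤ B ^ (-τ) :=
    Real.rpow_le_rpow_of_nonpos hB hBd (by linarith)
  have h3 : d₂ ^ (τ - s₂) ≤ d₁ ^ (τ - s₂) :=
    Real.rpow_le_rpow_of_nonpos hd₁ hle (by linarith)
  have h4 : d₁ ^ (-s₁) * d₁ ^ (τ - s₂) = d₁ ^ (-s₁ - s₂ + τ) := by
    rw [← Real.rpow_add hd₁]; ring_nf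
  calc d₁ ^ (-s₁) * d₂ ^ (-s₂) = d₁ ^ (-s₁) * (d₂ ^ (-τ) * d₂ ^ (τ - s₂)) := by rw [h1]
  _ ≤ d₁ ^ (-s₁) * (B ^ (-τ) * d₁ ^ (τ - s₂)) := by
      apply mul_le_mul_of_nonneg_left _ (Real.rpow_nonneg hd₁.le _)
      apply mul_le_mul h2 h3 (Real.rpow_nonneg hd₂.le _) (Real.rpow_nonneg hB.le _)
  _ = B ^ (-τ) * d₁ ^ (-s₁ - s₂ + τ) := by rw [← h4]; ring

lemma sum_bound (k : ℕ) (s₁ s₂ e Q : ℝ) (hQ0 : 0 ≤ Q) (d : ℕ → ℝ)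
    (hd : ∀ i, 0 < d i)
    (pair : ∀ i ∈ Finset.Icc 1 k, ∀ j ∈ Finset.Icc 1 k, i ≠ j →
      d i ^ (-s₁) * d j ^ (-s₂) ≤ Q * (d i ^ e + d j ^ e)) :
    (∑ i ∈ Finset.Icc 1 k, d i ^ (-s₁)) * (∑ j ∈ Finset.Icc 1 k, d j ^ (-s₂)) -
      (∑ i ∈ Finset.Icc 1 k, d i ^ (-s₁ - s₂)) ≤
      2 * k * Q * ∑ i ∈ Finset.Icc 1 k, d i ^ e := by
  set s : Finset ℕ := Finset.Icc 1 k with hs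
  have hApos : ∀ i, 0 ≤ d i ^ e := fun i => Real.rpow_nonneg (hd i).le _
  have card_s : s.card = k := by rw [hs, Nat.card_Icc]; omega
  have expand : (∑ i ∈ s, d i ^ (-s₁)) * (∑ j ∈ s, d j ^ (-s₂)) =
      ∑ i ∈ s, ∑ j ∈ s, d i ^ (-s₁) * d j ^ (-s₂) := Finset.sum_mul_sum _ _ _ _
  have diag : ∀ i, d i ^ (-s₁) * d i ^ (-s₂) = d i ^ (-s₁ - s₂) := by
    intro i
    rw [← Real.rpow_add (hd i)]
    ring_nf
  have main : (∑ i ∈ s, d i ^ (-s₁)) * (∑ j ∈ s, d j ^ (-s₂)) -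
      (∑ i ∈ s, d i ^ (-s₁ - s₂)) =
      ∑ i ∈ s, ∑ j ∈ s.erase i, d i ^ (-s₁) * d j ^ (-s₂) := by
    have h1 : ∑ i ∈ s, ∑ j ∈ s.erase i, d i ^ (-s₁) * d j ^ (-s₂) =
        ∑ i ∈ s, (∑ j ∈ s, d i ^ (-s₁) * d j ^ (-s₂) - d i ^ (-s₁ - s₂)) := by
      apply Finset.sum_congr rfl
      intro i hi
      rw [Finset.sum_erase_eq_sub hi, diag i]
    rw [h1, Finset.sum_sub_distrib, expand]
  rw [main]
  have bound1 : ∑ i ∈ s, ∑ j ∈ s.erase i, d i ^ (-s₁) * d j ^ (-s₂) ≤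
      ∑ i ∈ s, ∑ j ∈ s.erase i, Q * (d i ^ e + d j ^ e) := by
    apply Finset.sum_le_sum
    intro i hi
    apply Finset.sum_le_sum
    intro j hj
    exact pair i hi j (Finset.mem_of_mem_erase hj) (fun h => (Finset.ne_of_mem_erase hj) h.symm)
  have bound2 : ∑ i ∈ s, ∑ j ∈ s.erase i, Q * (d i ^ e + d j ^ e) ≤
      ∑ i ∈ s, ∑ j ∈ s, Q * (d i ^ e + d j ^ e) := by
    apply Finset.sum_le_sum
    intro i hi
    apply Finset.sum_le_sum_of_subset_of_nonneg (Finset.erase_subset _ _)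
    intro j _ _
    exact mul_nonneg hQ0 (add_nonneg (hApos i) (hApos j))
  have bound3 : ∑ i ∈ s, ∑ j ∈ s, Q * (d i ^ e + d j ^ e) =
      2 * k * Q * ∑ i ∈ s, d i ^ e := by
    have h1 : ∀ i ∈ s, ∑ j ∈ s, Q * (d i ^ e + d j ^ e) =
        (k:ℝ) * (Q * d i ^ e) + Q * ∑ j ∈ s, d j ^ e := by
      intro i hi
      rw [← Finset.mul_sum, Finset.sum_add_distrib, Finset.sum_const, card_s, nsmul_eq_mul,
        mul_add]
      ring
    rw [Finset.sum_congr rfl h1, Finset.sum_add_distrib, Finset.sum_const, card_s,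
      nsmul_eq_mul, ← Finset.mul_sum, ← Finset.mul_sum]
    ring
  calc ∑ i ∈ s, ∑ j ∈ s.erase i, d i ^ (-s₁) * d j ^ (-s₂) ≤
      ∑ i ∈ s, ∑ j ∈ s, Q * (d i ^ e + d j ^ e) := le_trans bound1 bound2
  _ = 2 * k * Q * ∑ i ∈ s, d i ^ e := bound3

/-- Let `n ≥ 2`, `s₁, s₂ > 0` and `0 < τ ≤ min{s₁, s₂}`. There exists `C = C(n, τ) > 0` such
that for all integers `k ≥ 3`, all reals `r > 1` and every `x ∈ ℝⁿ`,
`(Σ_i ⟨x−P^i⟩^{-s₁})(Σ_j ⟨x−P^j⟩^{-s₂}) − Σ_i ⟨x−P^i⟩^{-s₁−s₂}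
  ≤ C k (k/r)^τ Σ_i ⟨x−P^i⟩^{-s₁−s₂+τ}`. -/
theorem stmt3 (n : ℕ) (hn : 2 ≤ n) (s₁ s₂ τ : ℝ) (hs₁ : 0 < s₁) (hs₂ : 0 < s₂)
    (hτ0 : 0 < τ) (hτ : τ ≤ min s₁ s₂) :
    ∃ C : ℝ, 0 < C ∧ ∀ k : ℕ, 3 ≤ k → ∀ r : ℝ, 1 < r →
      ∀ x : EuclideanSpace ℝ (Fin n),
        (∑ i ∈ Finset.Icc 1 k, jap (x - pts n k r i) ^ (-s₁)) *
            (∑ j ∈ Finset.Icc 1 k, jap (x - pts n k r j) ^ (-s₂)) -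
          (∑ i ∈ Finset.Icc 1 k, jap (x - pts n k r i) ^ (-s₁ - s₂)) ≤
            C * k * ((k : ℝ) / r) ^ τ *
              ∑ i ∈ Finset.Icc 1 k, jap (x - pts n k r i) ^ (-s₁ - s₂ + τ) := by
  refine ⟨2, by norm_num, ?_⟩
  intro k hk r hr x
  have hr0 : 0 < r := by linarith
  have hk0 : (0:ℝ) < k := by exact_mod_cast (by omega : 0 < k)
  have hQ0 : (0:ℝ) ≤ ((k:ℝ) / r) ^ τ := Real.rpow_nonneg (by positivity) _
  have hpair : ∀ i ∈ Finset.Icc 1 k, ∀ j ∈ Finset.Icc 1 k, i ≠ j →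
      jap (x - pts n k r i) ^ (-s₁) * jap (x - pts n k r j) ^ (-s₂) ≤
        ((k:ℝ) / r) ^ τ * (jap (x - pts n k r i) ^ (-s₁ - s₂ + τ) +
          jap (x - pts n k r j) ^ (-s₁ - s₂ + τ)) := by
    intro i hi j hj hij
    set di := jap (x - pts n k r i) with hdi
    set dj := jap (x - pts n k r j) with hdj
    have hdi0 : 0 < di := jap_pos' _
    have hdj0 : 0 < dj := jap_pos' _
    have hdist : 4 * r / k ≤ ‖pts n k r i - pts n k r j‖ := by
      rcases lt_or_gt_of_ne hij with h | h
      · rw [norm_sub_rev]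
        exact pts_dist n k hn r hr0 j i hj hi h
      · exact pts_dist n k hn r hr0 i j hi hj h
    have htri : ‖pts n k r i - pts n k r j‖ ≤ di + dj := by
      have h1 : pts n k r i - pts n k r j = (x - pts n k r j) - (x - pts n k r i) := by
        abel
      rw [h1]
      calc ‖(x - pts n k r j) - (x - pts n k r i)‖
          ≤ ‖x - pts n k r j‖ + ‖x - pts n k r i‖ := norm_sub_le _ _
      _ ≤ dj + di := add_le_add (norm_le_jap' _) (norm_le_jap' _)
      _ = di + dj := by ring
    set B : ℝ := 2 * r / k with hB
    have hB0 : 0 < B := by positivity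
    have h2B : 2 * B ≤ di + dj := by
      calc 2 * B = 4 * r / k := by rw [hB]; ring
      _ ≤ _ := le_trans hdist htri
    have hBQ : B ^ (-τ) ≤ ((k:ℝ) / r) ^ τ := by
      have h1 : B ^ (-τ) = (B⁻¹) ^ τ := by
        rw [Real.rpow_neg hB0.le, Real.inv_rpow hB0.le]
      have h2 : B⁻¹ = (k:ℝ) / (2 * r) := by
        rw [hB]
        field_simp
      have h3 : (k:ℝ) / (2 * r) ≤ (k:ℝ) / r := by
        apply div_le_div_of_nonneg_left hk0.le hr0 (by linarith)
      rw [h1, h2]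
      exact Real.rpow_le_rpow (by positivity) h3 hτ0.le
    have hAi : 0 ≤ di ^ (-s₁ - s₂ + τ) := Real.rpow_nonneg hdi0.le _
    have hAj : 0 ≤ dj ^ (-s₁ - s₂ + τ) := Real.rpow_nonneg hdj0.le _
    rcases le_total di dj with h | h
    · have hBd : B ≤ dj := by linarith
      calc di ^ (-s₁) * dj ^ (-s₂) ≤ B ^ (-τ) * di ^ (-s₁ - s₂ + τ) :=
            key0 s₁ s₂ τ hτ0 (le_trans hτ (min_le_right _ _)) di dj B hdi0 hdj0 h hB0 hBd
      _ ≤ ((k:ℝ) / r) ^ τ * di ^ (-s₁ - s₂ + τ) :=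
            mul_le_mul_of_nonneg_right hBQ hAi
      _ ≤ ((k:ℝ) / r) ^ τ * (di ^ (-s₁ - s₂ + τ) + dj ^ (-s₁ - s₂ + τ)) := by
            apply mul_le_mul_of_nonneg_left (by linarith) hQ0
    · have hBd : B ≤ di := by linarith
      calc di ^ (-s₁) * dj ^ (-s₂) = dj ^ (-s₂) * di ^ (-s₁) := by ring
      _ ≤ B ^ (-τ) * dj ^ (-s₂ - s₁ + τ) :=
            key0 s₂ s₁ τ hτ0 (le_trans hτ (min_le_left _ _)) dj di B hdj0 hdi0 h hB0 hBd
      _ = B ^ (-τ) * dj ^ (-s₁ - s₂ + τ) := by ring_nf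
      _ ≤ ((k:ℝ) / r) ^ τ * dj ^ (-s₁ - s₂ + τ) :=
            mul_le_mul_of_nonneg_right hBQ hAj
      _ ≤ ((k:ℝ) / r) ^ τ * (di ^ (-s₁ - s₂ + τ) + dj ^ (-s₁ - s₂ + τ)) := by
            apply mul_le_mul_of_nonneg_left (by linarith) hQ0
  exact sum_bound k s₁ s₂ (-s₁ - s₂ + τ) (((k:ℝ) / r) ^ τ) hQ0
    (fun i => jap (x - pts n k r i)) (fun i => jap_pos' _) hpair
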